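/- For every n ≥ 1, the friendship graph F_n satisfies Z_-(F_n) = 1, pt_-(F_n) = 1, and th_-(F_n) = 2. -/

import Mathlib

open SimpleGraph

/-- One round of skew zero forcing: every vertex (blue or white) with exactly one
white neighbor colors that neighbor blue. -/
def skewStep {V : Type*} (G : SimpleGraph V) (B : Set V) : Set V :=
  B ∪ {w | ∃ v, G.Adj v w ∧ ∀ u, G.Adj v u → u ∉ B → u = w}

/-- The set of blue vertices after `n` rounds of skew zero forcing starting from `S`. -/
def skewIter {V : Type*} (G : SimpleGraph V) (S : Set V) : ℕ → Set V
  | 0 => S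
  | n + 1 => skewStep G (skewIter G S n)

/-- `S` is a skew zero forcing set of `G`. -/
def IsSkewZFS {V : Type*} (G : SimpleGraph V) (S : Set V) : Prop :=
  ∃ n, skewIter G S n = Set.univ

/-- The skew propagation time `pt₋(G;S)`: the number of rounds needed for all
vertices to become blue. -/
noncomputable def skewPt {V : Type*} (G : SimpleGraph V) (S : Set V) : ℕ :=
  sInf {n | skewIter G S n = Set.univ}

/-- The skew throttling number `th₋(G)`. -/
noncomputable def skewTh {V : Type*} (G : SimpleGraph V) : ℕ :=
  sInf {m | ∃ S : Set V, IsSkewZFS G S ∧ m = S.ncard + skewPt G S}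

/-- The skew throttling number over sets of size `k`, `th₋(G,k)`. -/
noncomputable def skewThK {V : Type*} (G : SimpleGraph V) (k : ℕ) : ℕ :=
  sInf {m | ∃ S : Set V, IsSkewZFS G S ∧ S.ncard = k ∧ m = S.ncard + skewPt G S}

/-- The skew zero forcing number `Z₋(G)`. -/
noncomputable def skewZ {V : Type*} (G : SimpleGraph V) : ℕ :=
  sInf {m | ∃ S : Set V, IsSkewZFS G S ∧ m = S.ncard}

/-- The skew propagation time `pt₋(G)`: minimum propagation time over minimum
skew zero forcing sets. -/
noncomputable def skewPtMin {V : Type*} (G : SimpleGraph V) : ℕ :=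
  sInf {m | ∃ S : Set V, IsSkewZFS G S ∧ S.ncard = skewZ G ∧ m = skewPt G S}

/-- `rK₂`: the disjoint union of `r` copies of `K₂`. -/
def rK2 (r : ℕ) : SimpleGraph (Fin r × Fin 2) :=
  SimpleGraph.fromRel (fun a b => a.1 = b.1)

/-- Disjoint union of two simple graphs. -/
def disjUnion {α β : Type*} (G : SimpleGraph α) (H : SimpleGraph β) :
    SimpleGraph (α ⊕ β) :=
  SimpleGraph.fromRel (fun x y =>
    match x, y with
    | Sum.inl a, Sum.inl b => G.Adj a b
    | Sum.inr a, Sum.inr b => H.Adj a b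
    | _, _ => False)

/-- The corona `G ∘ K₁`: attach a pendant leaf to every vertex of `G`. -/
def coronaK1 {α : Type*} (G : SimpleGraph α) : SimpleGraph (α ⊕ α) :=
  SimpleGraph.fromRel (fun x y =>
    match x, y with
    | Sum.inl a, Sum.inl b => G.Adj a b
    | Sum.inl a, Sum.inr b => a = b
    | _, _ => False)

/-- The corona `G ∘ K₂`: attach a private copy of `K₂` (a triangle) to every
vertex of `G`. -/
def coronaK2 {α : Type*} (G : SimpleGraph α) : SimpleGraph (α ⊕ α × Fin 2) :=
  SimpleGraph.fromRel (fun x y =>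
    match x, y with
    | Sum.inl a, Sum.inl b => G.Adj a b
    | Sum.inl a, Sum.inr b => a = b.1
    | Sum.inr a, Sum.inr b => a.1 = b.1
    | _, _ => False)

/-- The graph `H(s,t)` with hub `b`, pendant paths `b xᵢ yᵢ` and triangles `b zᵢ wᵢ`. -/
def Hgraph (s t : ℕ) : SimpleGraph (Unit ⊕ ((Fin s × Fin 2) ⊕ (Fin t × Fin 2))) :=
  SimpleGraph.fromRel (fun x y =>
    match x, y with
    | Sum.inl _, Sum.inr (Sum.inl p) => p.2 = 0
    | Sum.inl _, Sum.inr (Sum.inr _) => True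
    | Sum.inr (Sum.inl p), Sum.inr (Sum.inl q) => p.1 = q.1
    | Sum.inr (Sum.inr p), Sum.inr (Sum.inr q) => p.1 = q.1
    | _, _ => False)

/-- The friendship graph `Fₙ`: a universal vertex joined to `n` disjoint copies of `K₂`. -/
def friendshipGraph (n : ℕ) : SimpleGraph (Unit ⊕ (Fin n × Fin 2)) :=
  SimpleGraph.fromRel (fun x y =>
    match x, y with
    | Sum.inl _, Sum.inr _ => True
    | Sum.inr p, Sum.inr q => p.1 = q.1
    | _, _ => False)

/-- The balanced spider `T_{p,ℓ}`: a center with `p` legs of `ℓ` vertices each. -/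
def spider (p ℓ : ℕ) : SimpleGraph (Unit ⊕ (Fin p × Fin ℓ)) :=
  SimpleGraph.fromRel (fun x y =>
    match x, y with
    | Sum.inl _, Sum.inr q => q.2.val = 0
    | Sum.inr q, Sum.inr q' => q.1 = q'.1 ∧ q'.2.val = q.2.val + 1
    | _, _ => False)

/-- The hypercube graph `Qₙ`: binary strings of length `n`, adjacent iff they
differ in exactly one coordinate. -/
def hypercube (n : ℕ) : SimpleGraph (Fin n → Bool) :=
  SimpleGraph.fromRel (fun x y => ∃! i, x i ≠ y i)

/-! No vertex of `Fₙ` has exactly one neighbour, so the empty set forces nothing and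
`Z₋(Fₙ) ≥ 1`. The hub alone forces everything in one round: once it is blue, the only white
neighbour of each blade vertex is its partner. A set with propagation time `0` is the whole
vertex set, which has at least two elements; this gives `pt₋(Fₙ) ≥ 1` and `th₋(Fₙ) ≥ 2`. -/

section SkewForcing

variable {V : Type*} {G : SimpleGraph V}

lemma skewStep_empty (hG : ∀ v w, G.Adj v w → ∃ u, G.Adj v u ∧ u ≠ w) :
    skewStep G ∅ = ∅ := by
  ext w
  simp only [skewStep, Set.empty_union, Set.mem_ofPred_eq, Set.mem_empty_iff_false,
    not_false_eq_true, forall_const, iff_false, not_exists, not_and]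
  intro v hvw hv
  obtain ⟨u, hvu, huw⟩ := hG v w hvw
  exact huw (hv u hvu)

lemma skewIter_empty (hG : ∀ v w, G.Adj v w → ∃ u, G.Adj v u ∧ u ≠ w) (k : ℕ) :
    skewIter G ∅ k = ∅ := by
  induction k with
  | zero => rfl
  | succ k ih => rw [skewIter, ih, skewStep_empty hG]

lemma not_isSkewZFS_empty [Nonempty V] (hG : ∀ v w, G.Adj v w → ∃ u, G.Adj v u ∧ u ≠ w) :
    ¬ IsSkewZFS G ∅ := by
  rintro ⟨k, hk⟩
  rw [skewIter_empty hG] at hk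
  exact Set.empty_ne_univ hk

lemma skewIter_skewPt {S : Set V} (hS : IsSkewZFS G S) : skewIter G S (skewPt G S) = Set.univ :=
  Nat.sInf_mem hS

lemma eq_univ_of_skewPt_eq_zero {S : Set V} (hS : IsSkewZFS G S) (h : skewPt G S = 0) :
    S = Set.univ := by
  have := skewIter_skewPt hS
  rwa [h] at this

lemma isSkewZFS_of_skewStep_eq_univ {S : Set V} (h : skewStep G S = Set.univ) :
    IsSkewZFS G S :=
  ⟨1, h⟩

lemma skewPt_eq_one {S : Set V} (h : skewStep G S = Set.univ) (hS : S ≠ Set.univ) :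
    skewPt G S = 1 :=
  IsLeast.csInf_eq
    ⟨h, fun _ hk => Nat.one_le_iff_ne_zero.mpr fun hk0 => hS (by rwa [hk0] at hk)⟩

lemma one_le_ncard_of_isSkewZFS [Finite V] [Nonempty V]
    (hG : ∀ v w, G.Adj v w → ∃ u, G.Adj v u ∧ u ≠ w) {S : Set V} (hS : IsSkewZFS G S) :
    1 ≤ S.ncard := by
  rw [Nat.one_le_iff_ne_zero, Ne, Set.ncard_eq_zero]
  rintro rfl
  exact not_isSkewZFS_empty hG hS

variable [Finite V] [Nontrivial V]

lemma two_le_ncard_univ : 2 ≤ (Set.univ : Set V).ncard := by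
  rw [Set.ncard_univ]
  exact Finite.one_lt_card

lemma one_le_skewPt_of_ncard_eq_one {S : Set V} (hS : IsSkewZFS G S) (hcard : S.ncard = 1) :
    1 ≤ skewPt G S := by
  refine Nat.one_le_iff_ne_zero.mpr fun hpt => ?_
  have := two_le_ncard_univ (V := V)
  rw [← eq_univ_of_skewPt_eq_zero hS hpt, hcard] at this
  omega

lemma two_le_ncard_add_skewPt (hG : ∀ v w, G.Adj v w → ∃ u, G.Adj v u ∧ u ≠ w)
    {S : Set V} (hS : IsSkewZFS G S) : 2 ≤ S.ncard + skewPt G S := by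
  rcases Nat.eq_zero_or_pos (skewPt G S) with hpt | hpt
  · rw [hpt, eq_univ_of_skewPt_eq_zero hS hpt]
    exact two_le_ncard_univ
  · have := one_le_ncard_of_isSkewZFS hG hS
    omega

theorem skew_invariants_of_skewStep_singleton
    (hG : ∀ v w, G.Adj v w → ∃ u, G.Adj v u ∧ u ≠ w) (c : V) (hc : skewStep G {c} = Set.univ) :
    skewZ G = 1 ∧ skewPtMin G = 1 ∧ skewTh G = 2 := by
  have hZFS : IsSkewZFS G {c} := isSkewZFS_of_skewStep_eq_univ hc
  have hpt : skewPt G {c} = 1 := skewPt_eq_one hc (Set.singleton_ne_univ c)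
  have hZ : skewZ G = 1 :=
    IsLeast.csInf_eq ⟨⟨{c}, hZFS, (Set.ncard_singleton c).symm⟩,
      fun _ ⟨_, hS, hm⟩ => hm ▸ one_le_ncard_of_isSkewZFS hG hS⟩
  refine ⟨hZ,
    IsLeast.csInf_eq ⟨⟨{c}, hZFS, by rw [Set.ncard_singleton, hZ], hpt.symm⟩, ?_⟩,
    IsLeast.csInf_eq ⟨⟨{c}, hZFS, by rw [Set.ncard_singleton, hpt]⟩, ?_⟩⟩
  · rintro _ ⟨S, hS, hcard, rfl⟩
    exact one_le_skewPt_of_ncard_eq_one hS (hcard.trans hZ)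
  · rintro _ ⟨S, hS, rfl⟩
    exact two_le_ncard_add_skewPt hG hS

end SkewForcing

lemma fin_two_eq_of_ne_add_one {a b : Fin 2} (h : a + 1 ≠ b) : b = a := by
  revert a b; decide

section Friendship

variable {n : ℕ}

@[simp]
lemma friendshipGraph_adj_inl_inr (u : Unit) (p : Fin n × Fin 2) :
    (friendshipGraph n).Adj (Sum.inl u) (Sum.inr p) := by
  simp [friendshipGraph]

@[simp]
lemma friendshipGraph_adj_inr_inl (p : Fin n × Fin 2) (u : Unit) :
    (friendshipGraph n).Adj (Sum.inr p) (Sum.inl u) := by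
  simp [friendshipGraph]

@[simp]
lemma friendshipGraph_adj_inr_inr (p q : Fin n × Fin 2) :
    (friendshipGraph n).Adj (Sum.inr p) (Sum.inr q) ↔ p ≠ q ∧ p.1 = q.1 := by
  simp [friendshipGraph, eq_comm]

@[simp]
lemma friendshipGraph_not_adj_inl_inl (u u' : Unit) :
    ¬ (friendshipGraph n).Adj (Sum.inl u) (Sum.inl u') := by
  simp [friendshipGraph]

lemma friendshipGraph_exists_other_neighbor (v w : Unit ⊕ Fin n × Fin 2)
    (hvw : (friendshipGraph n).Adj v w) : ∃ u, (friendshipGraph n).Adj v u ∧ u ≠ w := by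
  rcases v with _ | p <;> rcases w with _ | q
  · simp at hvw
  · exact ⟨Sum.inr (q.1, q.2 + 1), by simp, by simp [Prod.ext_iff]⟩
  · exact ⟨Sum.inr (p.1, p.2 + 1), by simp [Prod.ext_iff], by simp⟩
  · exact ⟨Sum.inl (), by simp, by simp⟩

lemma skewStep_friendshipGraph_hub :
    skewStep (friendshipGraph n) {Sum.inl ()} = Set.univ := by
  refine Set.eq_univ_of_forall fun w => ?_
  rcases w with _ | p
  · exact Or.inl rfl
  refine Or.inr ⟨Sum.inr (p.1, p.2 + 1), by simp [Prod.ext_iff], ?_⟩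
  rintro (_ | q) hadj hwhite
  · exact absurd rfl hwhite
  · simp only [friendshipGraph_adj_inr_inr, ne_eq, Prod.ext_iff, not_and] at hadj
    obtain ⟨hne, hfst⟩ := hadj
    rw [Sum.inr.injEq, Prod.ext_iff]
    exact ⟨hfst.symm, fin_two_eq_of_ne_add_one (hne hfst)⟩

end Friendship

/-- for `n ≥ 1`, the friendship graph satisfies `Z₋(Fₙ) = 1`,
`pt₋(Fₙ) = 1` and `th₋(Fₙ) = 2`. -/
theorem friendship_skew_invariants (n : ℕ) (hn : 1 ≤ n) :
    skewZ (friendshipGraph n) = 1 ∧ skewPtMin (friendshipGraph n) = 1 ∧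
      skewTh (friendshipGraph n) = 2 :=
  have : Nontrivial (Unit ⊕ Fin n × Fin 2) :=
    nontrivial_of_ne (Sum.inl ()) (Sum.inr (⟨0, hn⟩, 0)) Sum.inl_ne_inr
  skew_invariants_of_skewStep_singleton friendshipGraph_exists_other_neighbor _
    skewStep_friendshipGraph_hub
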